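/- The category SobLSS of topologically sober T₀ locally small spaces with bounded continuous maps, the category SpLocS of pairs (L, L_s) with L a spatial frame and L_s a sup-generating sublattice with zero (with special localic maps), and the opposite of the category SpFrmS of the same pairs with dominating compatible frame homomorphisms, are all equivalent categories. -/

import Mathlib

open Set TopologicalSpace CategoryTheory

universe u



/-! ### Frames: spectra -/

/-- The set of non-unit primes of a frame. -/
def SpecS (L : Type u) [Order.Frame L] : Set L :=
  {p | p ≠ ⊤ ∧ ∀ a b : L, p = a ⊓ b → p = a ∨ p = b}

/-- `DeltaS a = { p ∈ Spec L : a ≰ p }`. -/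
def DeltaS {L : Type u} [Order.Frame L] (a : L) : Set (SpecS L) :=
  {p | ¬ a ≤ (p : L)}

variable {L M N : Type u} [Order.Frame L] [Order.Frame M] [Order.Frame N]

lemma SpecS.inf_le {p : L} (hp : p ∈ SpecS L) {a b : L} (h : a ⊓ b ≤ p) :
    a ≤ p ∨ b ≤ p := by
  have h1 : p = (p ⊔ a) ⊓ (p ⊔ b) := by
    rw [← sup_inf_left, sup_eq_left.mpr h]
  rcases hp.2 _ _ h1 with h2 | h2
  · exact Or.inl (by rw [h2]; exact le_sup_right)
  · exact Or.inr (by rw [h2]; exact le_sup_right)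

lemma DeltaS_bot : DeltaS (⊥ : L) = ∅ := by
  ext p; simp [DeltaS]

lemma DeltaS_top : DeltaS (⊤ : L) = univ := by
  ext p; simpa [DeltaS, top_le_iff] using p.2.1

lemma DeltaS_inf (a b : L) : DeltaS (a ⊓ b) = DeltaS a ∩ DeltaS b := by
  ext p
  constructor
  · intro hp
    constructor <;> · intro hle; exact hp (le_trans (by simp) hle)
  · rintro ⟨h1, h2⟩ hle
    rcases SpecS.inf_le p.2 hle with h | h
    · exact h1 h
    · exact h2 h

lemma DeltaS_sup (a b : L) : DeltaS (a ⊔ b) = DeltaS a ∪ DeltaS b := by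
  ext p
  constructor
  · intro hp
    by_cases ha : a ≤ (p : L)
    · exact Or.inr fun hb => hp (sup_le ha hb)
    · exact Or.inl ha
  · rintro (h | h) hle
    · exact h (le_trans le_sup_left hle)
    · exact h (le_trans le_sup_right hle)

lemma DeltaS_sSup (S : Set L) : DeltaS (sSup S) = ⋃ a ∈ S, DeltaS a := by
  ext p
  simp only [DeltaS, mem_setOf_eq, mem_iUnion, sSup_le_iff, not_forall]

/-- The hull-kernel topology on the spectrum of a frame: the open sets are
exactly the sets of the form `DeltaS a`. -/
def specTop (L : Type u) [Order.Frame L] : TopologicalSpace (SpecS L) where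
  IsOpen U := U ∈ Set.range (DeltaS (L := L))
  isOpen_univ := ⟨⊤, DeltaS_top⟩
  isOpen_inter := by
    rintro _ _ ⟨a, rfl⟩ ⟨b, rfl⟩
    exact ⟨a ⊓ b, DeltaS_inf a b⟩
  isOpen_sUnion := by
    intro S hS
    refine ⟨sSup {a | DeltaS a ∈ S}, ?_⟩
    rw [DeltaS_sSup]
    apply Set.Subset.antisymm
    · intro p hp
      simp only [mem_iUnion] at hp ⊢
      obtain ⟨a, ha, hpa⟩ := hp
      exact ⟨_, ha, hpa⟩
    · intro p hp
      rcases hp with ⟨U, hU, hpU⟩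
      obtain ⟨a, rfl⟩ := hS U hU
      simp only [mem_iUnion]
      exact ⟨a, hU, hpU⟩

/-! ### Right Galois adjoints -/

/-- The right Galois adjoint of a map between complete lattices. -/
def rAdj [CompleteLattice M] [CompleteLattice L] (h : L → M) : M → L :=
  fun m => sSup {l | h l ≤ m}

lemma gc_rAdj (h : FrameHom L M) : GaloisConnection ⇑h (rAdj ⇑h) := by
  intro l m
  constructor
  · intro hl; exact le_sSup hl
  · intro hl
    calc h l ≤ h (rAdj (⇑h) m) := OrderHomClass.mono h hl
      _ ≤ m := by
          rw [rAdj, map_sSup]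
          apply sSup_le
          rintro _ ⟨l', hl', rfl⟩
          exact hl'

lemma rAdj_id : rAdj (id : L → L) = id := by
  funext m
  exact le_antisymm (sSup_le fun _ h => h) (le_sSup le_rfl)

lemma rAdj_mem_SpecS (h : FrameHom L M) {p : M} (hp : p ∈ SpecS M) :
    rAdj ⇑h p ∈ SpecS L := by
  have gc := gc_rAdj h
  constructor
  · intro htop
    apply hp.1
    rw [top_le_iff.symm]
    have : h ⊤ ≤ p := (gc ⊤ p).mpr (htop ▸ le_rfl)
    simpa using this
  · intro a b hab
    have hle : h a ⊓ h b ≤ p := by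
      rw [← map_inf]
      exact (gc _ p).mpr (le_of_eq hab.symm)
    have h1 : rAdj ⇑h p ≤ a := hab ▸ inf_le_left
    have h2 : rAdj ⇑h p ≤ b := hab ▸ inf_le_right
    rcases SpecS.inf_le hp hle with hc | hc
    · exact Or.inl (le_antisymm h1 ((gc a p).mp hc))
    · exact Or.inr (le_antisymm h2 ((gc b p).mp hc))

/-! ### Way-below, continuous and spatial frames -/

/-- `b` is way below `a`. -/
def WayBelow (b a : L) : Prop :=
  ∀ D : Set L, D.Nonempty → DirectedOn (· ≤ ·) D → a ≤ sSup D → ∃ d ∈ D, b ≤ d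

/-- A continuous frame. -/
def IsContinuousFrame (L : Type u) [Order.Frame L] : Prop :=
  ∀ a : L, a = sSup {b | WayBelow b a}

/-- A spatial frame: every element is a meet of primes. -/
def IsSpatialFrame (L : Type u) [Order.Frame L] : Prop :=
  ∀ a : L, ∃ T ⊆ SpecS L, a = sInf T

/-! ### Dominating and compatible homomorphisms -/

/-- `h` is dominating with respect to the designated sublattices. -/
def Dominating (sL : Set L) (sM : Set M) (h : L → M) : Prop :=
  ∀ m ∈ sM, ∃ l ∈ sL, h l ⊓ m = m

/-- `h` is compatible with respect to the designated sublattices. -/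
def Compatible (sL : Set L) (sM : Set M) (h : L → M) : Prop :=
  ∀ l ∈ sL, ∀ m ∈ sM, h l ⊓ m ∈ sM



/-! ### Locally small spaces -/

/-- A locally small space: a set together with a smopology. -/
structure LSS : Type (u + 1) where
  X : Type u
  L : Set (Set X)
  empty_mem : ∅ ∈ L
  inter_mem : ∀ {A B : Set X}, A ∈ L → B ∈ L → A ∩ B ∈ L
  union_mem : ∀ {A B : Set X}, A ∈ L → B ∈ L → A ∪ B ∈ L
  covers : ∀ x : X, ∃ A ∈ L, x ∈ A

namespace LSS

/-- The weakly open sets: unions of subfamilies of the smopology. -/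
def wo (S : LSS.{u}) : Set (Set S.X) := {U | ∃ F ⊆ S.L, U = ⋃₀ F}

lemma mem_wo_iff {S : LSS.{u}} {U : Set S.X} :
    U ∈ S.wo ↔ ∀ x ∈ U, ∃ A ∈ S.L, x ∈ A ∧ A ⊆ U := by
  constructor
  · rintro ⟨F, hF, rfl⟩ x hx
    obtain ⟨A, hA, hxA⟩ := hx
    exact ⟨A, hF hA, hxA, fun y hy => ⟨A, hA, hy⟩⟩
  · intro h
    refine ⟨{A | A ∈ S.L ∧ A ⊆ U}, fun A hA => hA.1, ?_⟩
    apply Set.Subset.antisymm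
    · intro x hx
      obtain ⟨A, hA, hxA, hAU⟩ := h x hx
      exact ⟨A, ⟨hA, hAU⟩, hxA⟩
    · rintro x ⟨A, ⟨_, hAU⟩, hxA⟩
      exact hAU hxA

lemma L_subset_wo (S : LSS.{u}) : S.L ⊆ S.wo := by
  intro A hA
  exact ⟨{A}, by simpa using hA, by simp⟩

/-- The topology of weakly open sets. -/
def top (S : LSS.{u}) : TopologicalSpace S.X where
  IsOpen U := U ∈ S.wo
  isOpen_univ := mem_wo_iff.mpr fun x _ => by
    obtain ⟨A, hA, hxA⟩ := S.covers x
    exact ⟨A, hA, hxA, subset_univ A⟩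
  isOpen_inter := by
    intro U V hU hV
    rw [mem_wo_iff] at hU hV ⊢
    rintro x ⟨hxU, hxV⟩
    obtain ⟨A, hA, hxA, hAU⟩ := hU x hxU
    obtain ⟨B, hB, hxB, hBV⟩ := hV x hxV
    exact ⟨A ∩ B, S.inter_mem hA hB, ⟨hxA, hxB⟩, inter_subset_inter hAU hBV⟩
  isOpen_sUnion := by
    intro F hF
    rw [mem_wo_iff]
    rintro x ⟨U, hU, hxU⟩
    obtain ⟨A, hA, hxA, hAU⟩ := mem_wo_iff.mp (hF U hU) x hxU
    exact ⟨A, hA, hxA, hAU.trans (subset_sUnion_of_mem hU)⟩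

/-- The frame of weakly open sets. -/
abbrev O (S : LSS.{u}) : Type u := @Opens S.X S.top

noncomputable instance (S : LSS.{u}) : Order.Frame S.O :=
  letI := S.top
  inferInstanceAs (Order.Frame (Opens S.X))

lemma isOpen_iff_mem_wo {S : LSS.{u}} {U : Set S.X} :
    @IsOpen _ S.top U ↔ U ∈ S.wo := Iff.rfl

/-- The exterior of a point: the union of all weakly open sets omitting it. -/
def extSet (S : LSS.{u}) (x : S.X) : Set S.X := ⋃₀ {U ∈ S.wo | x ∉ U}

lemma extSet_mem_wo (S : LSS.{u}) (x : S.X) : S.extSet x ∈ S.wo := by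
  rw [mem_wo_iff]
  rintro y ⟨U, ⟨hUwo, hxU⟩, hyU⟩
  obtain ⟨A, hA, hyA, hAU⟩ := mem_wo_iff.mp hUwo y hyU
  exact ⟨A, hA, hyA, hAU.trans (subset_sUnion_of_mem ⟨hUwo, hxU⟩)⟩

/-- The exterior of a point, as an open set. -/
def extO (S : LSS.{u}) (x : S.X) : S.O :=
  letI := S.top
  ⟨S.extSet x, S.extSet_mem_wo x⟩

end LSS

/-! ### Bounded and continuous maps -/

/-- `f` is a bounded map with respect to the given smopologies. -/
def IsBdd {X Y : Type*} (LX : Set (Set X)) (LY : Set (Set Y)) (f : X → Y) : Prop :=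
  ∀ W ∈ LX, ∃ V ∈ LY, W ⊆ f ⁻¹' V

/-- `f` is a continuous map of locally small spaces. -/
def IsCt {X Y : Type*} (LX : Set (Set X)) (LY : Set (Set Y)) (f : X → Y) : Prop :=
  ∀ V ∈ LY, ∀ W ∈ LX, f ⁻¹' V ∩ W ∈ LX



/-! ### Frames with designated sup-generating sublattices -/

/-- A frame together with a sup-generating sublattice with zero. -/
structure FrmS : Type (u + 1) where
  L : Type u
  [str : Order.Frame L]
  s : Set L
  bot_mem : ⊥ ∈ s
  inf_mem : ∀ {a b : L}, a ∈ s → b ∈ s → a ⊓ b ∈ s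
  sup_mem : ∀ {a b : L}, a ∈ s → b ∈ s → a ⊔ b ∈ s
  supGen : ∀ a : L, ∃ T ⊆ s, a = sSup T

attribute [instance] FrmS.str

variable {L M N : Type u} [Order.Frame L] [Order.Frame M] [Order.Frame N]

lemma Dominating.compFH {sL : Set L} {sM : Set M} {sN : Set N}
    (h : FrameHom L M) (k : FrameHom M N)
    (hd : Dominating sL sM ⇑h) (kd : Dominating sM sN ⇑k)
    (hc : Compatible sL sM ⇑h) : Dominating sL sN ⇑(k.comp h) := by
  intro n hn
  obtain ⟨m, hm, hkm⟩ := kd n hn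
  obtain ⟨l, hl, hhl⟩ := hd m hm
  refine ⟨l, hl, ?_⟩
  have h1 : (k.comp h) l ⊓ n = k (h l) ⊓ (k m ⊓ n) := by rw [hkm]; rfl
  rw [h1, ← inf_assoc, ← map_inf, hhl, hkm]

lemma Compatible.compFH {sL : Set L} {sM : Set M} {sN : Set N}
    (h : FrameHom L M) (k : FrameHom M N)
    (hcH : Compatible sL sM ⇑h) (kd : Dominating sM sN ⇑k)
    (kc : Compatible sM sN ⇑k) : Compatible sL sN ⇑(k.comp h) := by
  intro l hl n hn
  obtain ⟨m, hm, hkm⟩ := kd n hn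
  have h1 : h l ⊓ m ∈ sM := hcH l hl m hm
  have h2 : k (h l ⊓ m) ⊓ n ∈ sN := kc _ h1 n hn
  have h3 : k (h l ⊓ m) ⊓ n = (k.comp h) l ⊓ n := by
    rw [map_inf, inf_assoc, hkm]; rfl
  rwa [h3] at h2

lemma rAdj_comp (h : FrameHom L M) (k : FrameHom M N) :
    rAdj ⇑(k.comp h) = rAdj ⇑h ∘ rAdj ⇑k := by
  funext n
  exact (gc_rAdj (k.comp h)).u_unique ((gc_rAdj h).compose (gc_rAdj k))
    (fun a => rfl)

/-! ### The categories LSS, FrmSCat and LocS -/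

/-- Bounded continuous maps: the morphisms of `LSS`. -/
abbrev LSSHom (S T : LSS.{u}) : Type u :=
  {f : S.X → T.X // IsBdd S.L T.L f ∧ IsCt S.L T.L f}

instance : Category LSS.{u} where
  Hom := LSSHom
  id S := ⟨id, fun W hW => ⟨W, hW, fun _ hx => hx⟩,
    fun V hV W hW => S.inter_mem hV hW⟩
  comp {S T U} f g := ⟨g.1 ∘ f.1,
    fun W hW => by
      obtain ⟨V, hV, hWV⟩ := f.2.1 W hW
      obtain ⟨Z, hZ, hVZ⟩ := g.2.1 V hV
      exact ⟨Z, hZ, fun x hx => hVZ (hWV hx)⟩,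
    fun Z hZ W hW => by
      obtain ⟨V, hV, hWV⟩ := f.2.1 W hW
      have h1 : g.1 ⁻¹' Z ∩ V ∈ T.L := g.2.2 Z hZ V hV
      have h2 : f.1 ⁻¹' (g.1 ⁻¹' Z ∩ V) ∩ W ∈ S.L := f.2.2 _ h1 W hW
      have h3 : (g.1 ∘ f.1) ⁻¹' Z ∩ W = f.1 ⁻¹' (g.1 ⁻¹' Z ∩ V) ∩ W := by
        ext x
        constructor
        · rintro ⟨hxZ, hxW⟩; exact ⟨⟨hxZ, hWV hxW⟩, hxW⟩
        · rintro ⟨⟨hxZ, _⟩, hxW⟩; exact ⟨hxZ, hxW⟩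
      rw [h3]; exact h2⟩
  id_comp f := Subtype.ext rfl
  comp_id f := Subtype.ext rfl
  assoc f g h := Subtype.ext rfl

/-- The category of frames with sup-generating sublattices and dominating
compatible frame homomorphisms. -/
structure FrmSCat : Type (u + 1) where
  P : FrmS.{u}

/-- Dominating compatible frame homomorphisms: the morphisms of `FrmSCat`. -/
abbrev FrmSHom (A B : FrmSCat.{u}) : Type u :=
  {h : FrameHom A.P.L B.P.L //
    Dominating A.P.s B.P.s ⇑h ∧ Compatible A.P.s B.P.s ⇑h}

instance : Category FrmSCat.{u} where
  Hom := FrmSHom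
  id A := ⟨FrameHom.id _, fun m hm => ⟨m, hm, inf_idem m⟩,
    fun l hl m hm => A.P.inf_mem hl hm⟩
  comp {A B C} h k := ⟨k.1.comp h.1,
    Dominating.compFH h.1 k.1 h.2.1 k.2.1 h.2.2,
    Compatible.compFH h.1 k.1 h.2.2 k.2.1 k.2.2⟩
  id_comp f := Subtype.ext (by ext a; rfl)
  comp_id f := Subtype.ext (by ext a; rfl)
  assoc f g h := Subtype.ext (by ext a; rfl)

/-- The category of frames with sup-generating sublattices and special localic
maps (right Galois adjoints of dominating compatible frame homomorphisms). -/
structure LocS : Type (u + 1) where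
  P : FrmS.{u}

/-- Special localic maps: the morphisms of `LocS`. -/
abbrev LocSHom (A B : LocS.{u}) : Type u :=
  {g : A.P.L → B.P.L // ∃ h : FrameHom B.P.L A.P.L,
    Dominating B.P.s A.P.s ⇑h ∧ Compatible B.P.s A.P.s ⇑h ∧ g = rAdj ⇑h}

instance : Category LocS.{u} where
  Hom := LocSHom
  id A := ⟨id, FrameHom.id _, fun m hm => ⟨m, hm, inf_idem m⟩,
    fun l hl m hm => A.P.inf_mem hl hm, by
      have h1 : ⇑(FrameHom.id A.P.L) = (id : A.P.L → A.P.L) := rfl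
      rw [h1, rAdj_id]⟩
  comp {A B C} f g := ⟨g.1 ∘ f.1, by
    obtain ⟨h1, h1d, h1c, hf⟩ := f.2
    obtain ⟨h2, h2d, h2c, hg⟩ := g.2
    refine ⟨h1.comp h2, Dominating.compFH h2 h1 h2d h1d h2c,
      Compatible.compFH h2 h1 h2c h1d h1c, ?_⟩
    rw [hf, hg, rAdj_comp]⟩
  id_comp f := Subtype.ext rfl
  comp_id f := Subtype.ext rfl
  assoc f g h := Subtype.ext rfl

/-! ### The functor Ω : LSS ⥤ LocS -/

/-- The object part of `Ω`. -/
noncomputable abbrev OmegaObj (S : LSS.{u}) : FrmS.{u} where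
  L := S.O
  s := {U : S.O | (U : Set S.X) ∈ S.L}
  bot_mem := by
    letI := S.top
    show ((⊥ : Opens S.X) : Set S.X) ∈ S.L
    simpa using S.empty_mem
  inf_mem := by
    letI := S.top
    intro a b ha hb
    show ((a ⊓ b : Opens S.X) : Set S.X) ∈ S.L
    rw [Opens.coe_inf]
    exact S.inter_mem ha hb
  sup_mem := by
    letI := S.top
    intro a b ha hb
    show ((a ⊔ b : Opens S.X) : Set S.X) ∈ S.L
    rw [Opens.coe_sup]
    exact S.union_mem ha hb
  supGen := by
    letI := S.top
    intro U
    refine ⟨{V : Opens S.X | (V : Set S.X) ∈ S.L ∧ (V : Set S.X) ⊆ (U : Set S.X)},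
      fun V hV => hV.1, ?_⟩
    apply Opens.ext
    rw [Opens.coe_sSup]
    apply Set.Subset.antisymm
    · intro x hx
      obtain ⟨A, hA, hxA, hAU⟩ := LSS.mem_wo_iff.mp U.2 x hx
      exact Set.mem_biUnion (show (⟨A, S.L_subset_wo hA⟩ : Opens S.X) ∈ _ from ⟨hA, hAU⟩) hxA
    · intro x hx
      simp only [Set.mem_iUnion] at hx
      obtain ⟨V, ⟨⟨_, hVU⟩, hxV⟩⟩ := hx
      exact hVU hxV

lemma contW {S T : LSS.{u}} (f : S.X → T.X) (hc : IsCt S.L T.L f) :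
    @Continuous S.X T.X S.top T.top f := by
  letI := S.top; letI := T.top
  rw [continuous_def]
  intro V hV
  rw [LSS.isOpen_iff_mem_wo] at hV ⊢
  rw [LSS.mem_wo_iff]
  intro x hx
  obtain ⟨A, hA, hfA, hAV⟩ := LSS.mem_wo_iff.mp hV (f x) hx
  obtain ⟨W, hW, hxW⟩ := S.covers x
  exact ⟨f ⁻¹' A ∩ W, hc A hA W hW, ⟨hfA, hxW⟩, fun y hy => hAV hy.1⟩

/-- The preimage frame homomorphism `L^wo f` of a bounded continuous map. -/
noncomputable def preimFH {S T : LSS.{u}} (f : LSSHom S T) : FrameHom T.O S.O :=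
  @Opens.comap S.X T.X S.top T.top (@ContinuousMap.mk S.X T.X S.top T.top f.1 (contW f.1 f.2.2))

lemma preimFH_coe {S T : LSS.{u}} (f : LSSHom S T) (V : T.O) :
    ((preimFH f V : S.O) : Set S.X) = f.1 ⁻¹' (V : Set T.X) := by
  letI := S.top; letI := T.top
  exact Opens.coe_comap _ V

/-- The morphism part of `Ω`. -/
noncomputable def OmegaMap {S T : LSS.{u}} (f : LSSHom S T) :
    LocSHom ⟨OmegaObj S⟩ ⟨OmegaObj T⟩ :=
  ⟨rAdj ⇑(preimFH f), preimFH f,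
    by
      letI := S.top
      letI := T.top
      intro m hm
      obtain ⟨V, hV, hmV⟩ := f.2.1 (m : Set S.X) hm
      refine ⟨⟨V, T.L_subset_wo hV⟩, hV, ?_⟩
      apply Opens.ext
      show ((preimFH f ⟨V, _⟩ ⊓ m : Opens S.X) : Set S.X) = (m : Set S.X)
      rw [Opens.coe_inf, preimFH_coe]
      exact Set.inter_eq_self_of_subset_right hmV,
    by
      letI := S.top
      intro l hl m hm
      show ((preimFH f l ⊓ m : Opens S.X) : Set S.X) ∈ S.L
      rw [Opens.coe_inf, preimFH_coe]
      exact f.2.2 _ hl _ hm,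
    rfl⟩

lemma preimFH_id (S : LSS.{u}) : preimFH (𝟙 S) = FrameHom.id S.O := by
  apply DFunLike.ext
  intro V
  letI := S.top
  apply Opens.ext
  rw [preimFH_coe]
  rfl

lemma preimFH_comp {S T U : LSS.{u}} (f : S ⟶ T) (g : T ⟶ U) :
    preimFH (f ≫ g) = (preimFH f).comp (preimFH g) := by
  apply DFunLike.ext
  intro V
  letI := S.top
  apply Opens.ext
  rw [preimFH_coe]
  show _ = ((preimFH f (preimFH g V) : S.O) : Set S.X)
  rw [preimFH_coe, preimFH_coe]
  rfl

/-- The spectral functor `Ω : LSS ⥤ LocS`. -/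
noncomputable def Omega : LSS.{u} ⥤ LocS.{u} where
  obj S := ⟨OmegaObj S⟩
  map f := OmegaMap f
  map_id S := by
    apply Subtype.ext
    show rAdj ⇑(preimFH (𝟙 S)) = id
    rw [preimFH_id]
    have h1 : ⇑(FrameHom.id S.O) = (id : S.O → S.O) := rfl
    rw [h1, rAdj_id]
  map_comp {S T U} f g := by
    apply Subtype.ext
    show rAdj ⇑(preimFH (f ≫ g)) = rAdj ⇑(preimFH g) ∘ rAdj ⇑(preimFH f)
    rw [preimFH_comp, rAdj_comp]

/-! ### The functor Σ : LocS ⥤ LSS -/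

/-- The object part of `Σ`: the spectrum with the smopology `Δ(L_s)`. -/
abbrev SigmaObj (P : LocS.{u}) : LSS.{u} where
  X := ↥(SpecS P.P.L)
  L := DeltaS '' P.P.s
  empty_mem := ⟨⊥, P.P.bot_mem, DeltaS_bot⟩
  inter_mem := by
    rintro _ _ ⟨a, ha, rfl⟩ ⟨b, hb, rfl⟩
    exact ⟨a ⊓ b, P.P.inf_mem ha hb, DeltaS_inf a b⟩
  union_mem := by
    rintro _ _ ⟨a, ha, rfl⟩ ⟨b, hb, rfl⟩
    exact ⟨a ⊔ b, P.P.sup_mem ha hb, DeltaS_sup a b⟩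
  covers := by
    intro p
    obtain ⟨T, hT, hsup⟩ := P.P.supGen ⊤
    by_contra hcon
    push_neg at hcon
    apply p.2.1
    apply top_le_iff.mp
    rw [hsup]
    apply sSup_le
    intro a ha
    by_contra hle
    exact (hcon (DeltaS a) ⟨a, hT ha, rfl⟩) hle

/-- The morphism part of `Σ`: the restriction of a special localic map to the
spectra. -/
def SigmaMap {A B : LocS.{u}} (g : LocSHom A B) :
    LSSHom (SigmaObj A) (SigmaObj B) :=
  ⟨fun p => ⟨g.1 p.1, by
      obtain ⟨h, _, _, hg⟩ := g.2
      rw [hg]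
      exact rAdj_mem_SpecS h p.2⟩,
    by
      rintro _ ⟨a, ha, rfl⟩
      obtain ⟨h, hdom, hcomp, hg⟩ := g.2
      obtain ⟨l, hl, hla⟩ := hdom a ha
      refine ⟨DeltaS l, ⟨l, hl, rfl⟩, ?_⟩
      intro p hpa
      show ¬ l ≤ g.1 p.1
      intro hle
      rw [hg] at hle
      have h1 : h l ≤ (p : A.P.L) := (gc_rAdj h l p.1).mpr hle
      exact hpa (hla ▸ le_trans inf_le_left h1),
    by
      rintro _ ⟨d, hd, rfl⟩ _ ⟨e, he, rfl⟩
      obtain ⟨h, hdom, hcomp, hg⟩ := g.2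
      refine ⟨h d ⊓ e, hcomp d hd e he, ?_⟩
      ext p
      constructor
      · intro hle
        constructor
        · show ¬ d ≤ g.1 p.1
          intro hdg
          rw [hg] at hdg
          have h4 : h d ≤ (p : A.P.L) := (gc_rAdj h d p.1).mpr hdg
          exact hle (le_trans inf_le_left h4)
        · intro heg
          exact hle (le_trans inf_le_right heg)
      · rintro ⟨h1, h2⟩ hle
        rcases SpecS.inf_le p.2 hle with hc | hc
        · apply h1
          show d ≤ g.1 p.1
          rw [hg]
          exact (gc_rAdj h d p.1).mp hc
        · exact h2 hc⟩

/-- The spectral functor `Σ : LocS ⥤ LSS`. -/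
def SigmaF : LocS.{u} ⥤ LSS.{u} where
  obj P := SigmaObj P
  map g := SigmaMap g
  map_id A := Subtype.ext (funext fun p => Subtype.ext rfl)
  map_comp f g := Subtype.ext (funext fun p => Subtype.ext rfl)

/-! ### A Stone-type duality -/

/-- A `T₀` locally small space: the smopology separates points. -/
def SeparatesPoints' (S : LSS.{u}) : Prop :=
  ∀ x y : S.X, x ≠ y → ∃ V ∈ S.L, (x ∈ V ∧ y ∉ V) ∨ (y ∈ V ∧ x ∉ V)

/-- A topologically sober `T₀` locally small space (in this setting sobriety
includes the `T₀` separation property of the topology of weakly open sets). -/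
def IsSobLSS (S : LSS.{u}) : Prop :=
  SeparatesPoints' S ∧ @T0Space S.X S.top ∧ @QuasiSober S.X S.top

/-- The full subcategory of `LSS` of topologically sober `T₀` locally small
spaces. -/
abbrev SobLSS := ObjectProperty.FullSubcategory (fun S : LSS.{u} => IsSobLSS S)

/-- The full subcategory of `LocS` of pairs whose frame is spatial. -/
abbrev SpLocS := ObjectProperty.FullSubcategory (fun P : LocS.{u} => IsSpatialFrame P.P.L)

/-- The full subcategory of `FrmSCat` of pairs whose frame is spatial. -/
abbrev SpFrmS := ObjectProperty.FullSubcategory (fun P : FrmSCat.{u} => IsSpatialFrame P.P.L)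

/-!
The spectrum of a frame, topologised by the sets `Δ(a) = {p prime | a ≰ p}`, is sober: the meet
of the points of an irreducible closed set is again prime, and it is the generic point. When the
frame comes with a sup-generating sublattice `L_s`, the sets `Δ(L_s)` form a smopology generating
this topology, so `Σ` lands in `SobLSS`. In the other direction a point `x` of a locally small space
gives the prime open `ext x`, the complement of the closure of `x`, and `L^wo` is spatial because
every weakly open `U` is the meet of the `ext x` with `x ∉ U`. For a sober `T₀` space, `x ↦ ext x`
is a bijection onto the primes of `L^wo` carrying `L_X` to `Δ(L_X)`, and for a spatial frame
`a ↦ Δ(a)` is an order isomorphism onto the opens of its spectrum; these are the unit and the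
counit of `SobLSS ≌ SpLocS`.

A special localic map is the right adjoint of exactly one frame homomorphism, so `LocS` and
`FrmSᵒᵖ` are isomorphic categories. Spatiality is invariant under isomorphism, so this restricts to
`SpLocS ≌ SpFrmSᵒᵖ`.
-/

lemma rAdj_injective : Function.Injective fun h : FrameHom L M => rAdj ⇑h :=
  fun h k e => DFunLike.ext _ _ fun _ =>
    (gc_rAdj h).l_unique (gc_rAdj k) fun m => congrFun e m

lemma rAdj_orderIso {α β : Type u} [CompleteLattice α] [CompleteLattice β] (e : α ≃o β) :
    rAdj ⇑e = ⇑e.symm :=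
  funext fun m => le_antisymm (sSup_le fun _ hl => e.le_symm_apply.mpr hl)
    (le_sSup (e.apply_symm_apply m).le)

lemma mem_SpecS_of_inf_le {p : L} (htop : p ≠ ⊤)
    (hp : ∀ a b : L, a ⊓ b ≤ p → a ≤ p ∨ b ≤ p) : p ∈ SpecS L := by
  refine ⟨htop, fun a b hab => ?_⟩
  rcases hp a b hab.ge with ha | hb
  · exact Or.inl (le_antisymm (hab ▸ inf_le_left) ha)
  · exact Or.inr (le_antisymm (hab ▸ inf_le_right) hb)

lemma OrderIso.map_mem_SpecS (e : L ≃o M) {p : L} (hp : p ∈ SpecS L) : e p ∈ SpecS M := by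
  refine mem_SpecS_of_inf_le (fun h => hp.1 ((map_eq_top_iff e).mp h)) fun a b hab => ?_
  have hab' : e.symm a ⊓ e.symm b ≤ p := by
    rwa [← e.symm.map_inf, e.symm_apply_le]
  exact (SpecS.inf_le hp hab').imp e.symm_apply_le.mp e.symm_apply_le.mp

lemma IsSpatialFrame.of_orderIso (e : L ≃o M) (hL : IsSpatialFrame L) : IsSpatialFrame M := by
  intro a
  obtain ⟨T, hT, ha⟩ := hL (e.symm a)
  refine ⟨e '' T, image_subset_iff.mpr fun p hp => e.map_mem_SpecS (hT hp), ?_⟩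
  rw [← e.apply_symm_apply a, ha, e.map_sInf, sInf_image]

lemma DeltaS_subset_DeltaS_iff (hL : IsSpatialFrame L) {a b : L} :
    DeltaS a ⊆ DeltaS b ↔ a ≤ b := by
  refine ⟨fun h => ?_, fun hab p hpa hpb => hpa (hab.trans hpb)⟩
  obtain ⟨T, hT, rfl⟩ := hL b
  refine le_sInf fun t ht => ?_
  by_contra hat
  exact (h (show (⟨t, hT ht⟩ : SpecS L) ∈ DeltaS a from hat)) (sInf_le ht)

namespace FrmS

lemma exists_mem_s_le_not_le (P : FrmS.{u}) {a b : P.L} (h : ¬ a ≤ b) :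
    ∃ c ∈ P.s, c ≤ a ∧ ¬ c ≤ b := by
  obtain ⟨T, hT, rfl⟩ := P.supGen a
  obtain ⟨c, hcT, hcb⟩ := not_forall₂.mp (mt sSup_le h)
  exact ⟨c, hT hcT, le_sSup hcT, hcb⟩

variable {A B : FrmS.{u}}

lemma dominating_orderIso (e : A.L ≃o B.L) (he : ∀ a, e a ∈ B.s ↔ a ∈ A.s) :
    Dominating A.s B.s ⇑e := fun m hm =>
  ⟨e.symm m, (he _).mp (by rwa [e.apply_symm_apply]), by rw [e.apply_symm_apply, inf_idem]⟩

lemma compatible_orderIso (e : A.L ≃o B.L) (he : ∀ a, e a ∈ B.s ↔ a ∈ A.s) :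
    Compatible A.s B.s ⇑e := fun l hl m hm => by
  rw [← e.apply_symm_apply m, ← map_inf, he]
  exact A.inf_mem hl ((he _).mp (by rwa [e.apply_symm_apply]))

end FrmS

section SpecTop

lemma closure_singleton_specTop (p : SpecS L) :
    @closure _ (specTop L) {p} = {q : SpecS L | (p : L) ≤ q} := by
  let := specTop L
  ext q
  rw [mem_closure_iff]
  constructor
  · intro h
    by_contra hpq
    obtain ⟨r, hr, rfl⟩ := h (DeltaS (p : L)) ⟨p, rfl⟩ hpq
    exact hr le_rfl
  · rintro hpq _ ⟨a, rfl⟩ hq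
    exact ⟨p, fun hap => hq (hap.trans hpq), rfl⟩

lemma t0Space_specTop : @T0Space _ (specTop L) := by
  let := specTop L
  refine t0Space_iff_inseparable _ |>.mpr fun p q h => ?_
  rw [inseparable_iff_closure_eq, closure_singleton_specTop, closure_singleton_specTop] at h
  exact Subtype.ext (le_antisymm ((Set.ext_iff.mp h q).mpr le_rfl) ((Set.ext_iff.mp h p).mp le_rfl))

lemma sInf_mem_SpecS_of_isIrreducible {S : Set (SpecS L)}
    (hS : @IsIrreducible _ (specTop L) S) : sInf (Subtype.val '' S) ∈ SpecS L := by
  let := specTop L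
  obtain ⟨q₀, hq₀⟩ := hS.nonempty
  have hle : ∀ q ∈ S, sInf (Subtype.val '' S) ≤ q := fun q hq => sInf_le ⟨q, hq, rfl⟩
  refine mem_SpecS_of_inf_le (fun h => q₀.2.1 (top_le_iff.mp (h ▸ hle q₀ hq₀))) fun a b hab => ?_
  by_contra! hne
  have hmeet (c : L) (hc : ¬ c ≤ sInf (Subtype.val '' S)) : (S ∩ DeltaS c).Nonempty := by
    simp only [le_sInf_iff, forall_mem_image, not_forall] at hc
    obtain ⟨q, hq, hcq⟩ := hc
    exact ⟨q, hq, hcq⟩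
  obtain ⟨q, hq, hqa, hqb⟩ := hS.2 _ _ ⟨a, rfl⟩ ⟨b, rfl⟩ (hmeet a hne.1) (hmeet b hne.2)
  have hqab : q ∈ DeltaS (a ⊓ b) := by rw [DeltaS_inf]; exact ⟨hqa, hqb⟩
  exact hqab (hab.trans (hle q hq))

lemma quasiSober_specTop : @QuasiSober _ (specTop L) := by
  let := specTop L
  refine ⟨fun {S} hS hSc => ⟨⟨_, sInf_mem_SpecS_of_isIrreducible hS⟩, ?_⟩⟩
  obtain ⟨a, ha⟩ : Sᶜ ∈ Set.range (DeltaS (L := L)) := hSc.isOpen_compl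
  have hS_iff (q : SpecS L) : q ∈ S ↔ a ≤ (q : L) := by
    rw [← not_iff_not, ← mem_compl_iff, ← ha]
    exact Iff.rfl
  have ha_le : a ≤ sInf (Subtype.val '' S) := le_sInf <| by
    rintro _ ⟨r, hr, rfl⟩
    exact (hS_iff r).mp hr
  refine (closure_singleton_specTop _).trans (Set.ext fun q => ?_)
  constructor
  · exact fun hq => (hS_iff q).mpr (ha_le.trans hq)
  · exact fun hq => sInf_le ⟨q, hq, rfl⟩

end SpecTop

lemma isPreirreducible_compl_of_mem_SpecS {X : Type u} [TopologicalSpace X] {U : Opens X}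
    (hU : U ∈ SpecS (Opens X)) : IsPreirreducible (U : Set X)ᶜ := by
  rintro u v hu hv ⟨x, hxU, hxu⟩ ⟨y, hyU, hyv⟩
  by_contra h
  have hle : (⟨u, hu⟩ ⊓ ⟨v, hv⟩ : Opens X) ≤ U := fun z hz => by_contra fun hzU => h ⟨z, hzU, hz⟩
  rcases SpecS.inf_le hU hle with huU | hvU
  exacts [hxU (huU hxu), hyU (hvU hyv)]

namespace LSS

section

variable (S : LSS.{u})

lemma notMem_extSet_self (x : S.X) : x ∉ S.extSet x :=
  fun ⟨_, ⟨_, hxU⟩, hxU'⟩ => hxU hxU'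

lemma le_extO_iff (U : S.O) (x : S.X) : U ≤ S.extO x ↔ x ∉ (U : Set S.X) := by
  let := S.top
  exact ⟨fun h hx => S.notMem_extSet_self x (h hx), fun hx => subset_sUnion_of_mem ⟨U.2, hx⟩⟩

lemma extO_mem_SpecS (x : S.X) : S.extO x ∈ SpecS S.O := by
  refine mem_SpecS_of_inf_le (fun h => S.notMem_extSet_self x ?_) fun U V hUV => ?_
  · let := S.top
    have hext : S.extSet x = univ := congrArg SetLike.coe h
    exact hext ▸ mem_univ x
  · simp only [le_extO_iff] at hUV ⊢
    exact not_and_or.mp hUV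

lemma isSpatialFrame_O : IsSpatialFrame S.O := by
  intro U
  refine ⟨S.extO '' {x | x ∉ (U : Set S.X)}, image_subset_iff.mpr fun x _ => S.extO_mem_SpecS x,
    le_antisymm (le_sInf ?_) fun x hx => ?_⟩
  · rintro _ ⟨x, hx, rfl⟩
    exact (S.le_extO_iff U x).mpr hx
  · by_contra hxU
    exact (S.le_extO_iff _ x).mp (sInf_le (mem_image_of_mem _ hxU)) hx

lemma extSet_eq_compl_closure (x : S.X) : S.extSet x = (@closure _ S.top {x})ᶜ := by
  let := S.top
  ext y
  simp only [mem_compl_iff, mem_closure_iff, not_forall, exists_prop, extSet, mem_sUnion,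
    mem_ofPred_eq, isOpen_iff_mem_wo, inter_singleton_nonempty]
  exact ⟨fun ⟨U, ⟨hU, hxU⟩, hyU⟩ => ⟨U, hU, hyU, hxU⟩, fun ⟨U, hU, hyU, hxU⟩ => ⟨U, ⟨hU, hxU⟩, hyU⟩⟩

def toSpec (x : S.X) : SpecS S.O := ⟨S.extO x, S.extO_mem_SpecS x⟩

lemma preimage_toSpec_DeltaS (U : S.O) : S.toSpec ⁻¹' DeltaS U = (U : Set S.X) :=
  Set.ext fun x => not_iff_comm.mpr (S.le_extO_iff U x).symm

lemma toSpec_injective (h : @T0Space S.X S.top) : Function.Injective S.toSpec := by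
  let := S.top
  intro x y hxy
  have hext : S.extSet x = S.extSet y :=
    congrArg (fun p : SpecS S.O => ((p : S.O) : Set S.X)) hxy
  rw [extSet_eq_compl_closure, extSet_eq_compl_closure, compl_inj_iff] at hext
  exact (inseparable_iff_closure_eq.mpr hext).eq

lemma toSpec_surjective (h : @QuasiSober S.X S.top) : Function.Surjective S.toSpec := by
  let := S.top
  intro p
  have hne : ((p : S.O) : Set S.X)ᶜ.Nonempty :=
    nonempty_compl.mpr fun h => p.2.1 (SetLike.coe_injective h)
  obtain ⟨x, hx⟩ := QuasiSober.sober ⟨hne, isPreirreducible_compl_of_mem_SpecS p.2⟩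
    (p : S.O).isOpen.isClosed_compl
  refine ⟨x, Subtype.ext (SetLike.coe_injective ?_)⟩
  change S.extSet x = _
  rw [extSet_eq_compl_closure, hx.def, compl_compl]

noncomputable def toSpecEquiv (hS : IsSobLSS S) : S.X ≃ SpecS S.O :=
  Equiv.ofBijective S.toSpec ⟨S.toSpec_injective hS.2.1, S.toSpec_surjective hS.2.2⟩

lemma preimage_toSpec_mem_iff (hS : IsSobLSS S) (B : Set (SpecS S.O)) :
    S.toSpec ⁻¹' B ∈ S.L ↔ B ∈ (SigmaObj ⟨OmegaObj S⟩).L := by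
  let := S.top
  constructor
  · intro hB
    refine ⟨⟨_, S.L_subset_wo hB⟩, hB, ?_⟩
    exact Set.preimage_injective.mpr (S.toSpec_surjective hS.2.2) (S.preimage_toSpec_DeltaS _)
  · rintro ⟨U, hU, rfl⟩
    rwa [preimage_toSpec_DeltaS]

lemma rAdj_preimFH_extO {T : LSS.{u}} (f : LSSHom S T) (x : S.X) :
    rAdj ⇑(preimFH f) (S.extO x) = T.extO (f.1 x) := by
  refine eq_of_forall_le_iff fun V => ?_
  rw [← (gc_rAdj (preimFH f)).le_iff_le, le_extO_iff, le_extO_iff, preimFH_coe]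
  rfl

end

variable {S T : LSS.{u}}

def homOfEquiv (e : S.X ≃ T.X) (he : ∀ B, e ⁻¹' B ∈ S.L ↔ B ∈ T.L) : S ⟶ T :=
  ⟨e, fun W hW => ⟨e.symm ⁻¹' W, (he _).mp (by rwa [e.preimage_symm_preimage]),
      fun x hx => by simpa using hx⟩,
    fun V hV W hW => S.inter_mem ((he V).mpr hV) hW⟩

def isoOfEquiv (e : S.X ≃ T.X) (he : ∀ B, e ⁻¹' B ∈ S.L ↔ B ∈ T.L) : S ≅ T where
  hom := homOfEquiv e he
  inv := homOfEquiv e.symm fun A => by rw [← he, e.preimage_symm_preimage]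
  hom_inv_id := Subtype.ext (funext e.symm_apply_apply)
  inv_hom_id := Subtype.ext (funext e.apply_symm_apply)

end LSS

section SigmaObj

variable (P : LocS.{u})

lemma SigmaObj_isOpen_iff {U : Set (SpecS P.P.L)} :
    (SigmaObj P).top.IsOpen U ↔ U ∈ Set.range DeltaS := by
  constructor
  · rintro ⟨F, hF, rfl⟩
    refine ⟨sSup {b | b ∈ P.P.s ∧ DeltaS b ∈ F}, ?_⟩
    rw [DeltaS_sSup]
    apply Set.Subset.antisymm
    · simp only [iUnion_subset_iff]
      exact fun b hb => subset_sUnion_of_mem hb.2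
    · rintro p ⟨V, hV, hpV⟩
      obtain ⟨b, hb, rfl⟩ := hF hV
      exact mem_biUnion ⟨hb, hV⟩ hpV
  · rintro ⟨a, rfl⟩
    obtain ⟨T, hT, rfl⟩ := P.P.supGen a
    exact ⟨DeltaS '' T, image_mono hT, by rw [DeltaS_sSup, sUnion_image]⟩

lemma SigmaObj_top_eq : (SigmaObj P).top = specTop P.P.L :=
  TopologicalSpace.ext (funext fun _ => propext (SigmaObj_isOpen_iff P))

lemma SigmaObj_separatesPoints : SeparatesPoints' (SigmaObj P) := by
  intro p q hpq
  have hne : ¬ (p : P.P.L) ≤ q ∨ ¬ (q : P.P.L) ≤ p := by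
    by_contra! h
    exact hpq (Subtype.ext (le_antisymm h.1 h.2))
  rcases hne with h | h
  · obtain ⟨c, hc, hcp, hcq⟩ := P.P.exists_mem_s_le_not_le h
    exact ⟨DeltaS c, mem_image_of_mem _ hc, Or.inr ⟨hcq, fun hpc => hpc hcp⟩⟩
  · obtain ⟨c, hc, hcq, hcp⟩ := P.P.exists_mem_s_le_not_le h
    exact ⟨DeltaS c, mem_image_of_mem _ hc, Or.inl ⟨hcp, fun hqc => hqc hcq⟩⟩

lemma SigmaObj_isSobLSS : IsSobLSS (SigmaObj P) := by
  refine ⟨SigmaObj_separatesPoints P, ?_, ?_⟩ <;> rw [SigmaObj_top_eq]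
  exacts [t0Space_specTop, quasiSober_specTop]

end SigmaObj

namespace LocS

section

variable (A : LocS.{u})

def deltaOpen (a : A.P.L) : (SigmaObj A).O :=
  @Opens.mk _ (SigmaObj A).top (DeltaS a) ((SigmaObj_isOpen_iff A).mpr ⟨a, rfl⟩)

lemma deltaOpen_surjective : Function.Surjective A.deltaOpen := by
  let := (SigmaObj A).top
  intro U
  obtain ⟨a, ha⟩ := (SigmaObj_isOpen_iff A).mp U.isOpen
  exact ⟨a, SetLike.coe_injective ha⟩

noncomputable def deltaOrderIso (hA : IsSpatialFrame A.P.L) : A.P.L ≃o (SigmaObj A).O :=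
  OrderIso.ofSurjective (OrderEmbedding.ofMapLEIff A.deltaOpen fun _ _ =>
    (DeltaS_subset_DeltaS_iff hA : DeltaS _ ⊆ DeltaS _ ↔ _)) A.deltaOpen_surjective

lemma deltaOrderIso_apply (hA : IsSpatialFrame A.P.L) (a : A.P.L) :
    A.deltaOrderIso hA a = A.deltaOpen a := rfl

lemma deltaOrderIso_mem_iff (hA : IsSpatialFrame A.P.L) (a : A.P.L) :
    A.deltaOrderIso hA a ∈ (OmegaObj (SigmaObj A)).s ↔ a ∈ A.P.s := by
  have hinj : Function.Injective (DeltaS (L := A.P.L)) := fun a b h =>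
    le_antisymm ((DeltaS_subset_DeltaS_iff hA).mp h.le) ((DeltaS_subset_DeltaS_iff hA).mp h.ge)
  exact (hinj.mem_set_image : DeltaS a ∈ DeltaS '' A.P.s ↔ _)

end

variable {A B : LocS.{u}}

lemma preimFH_SigmaMap_deltaOpen (g : A ⟶ B) {h : FrameHom B.P.L A.P.L} (hg : g.1 = rAdj ⇑h)
    (b : B.P.L) : preimFH (SigmaMap g) (B.deltaOpen b) = A.deltaOpen (h b) := by
  let := (SigmaObj A).top
  refine SetLike.coe_injective (Set.ext fun q => ?_)
  rw [preimFH_coe]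
  show ¬ b ≤ g.1 q.1 ↔ ¬ h b ≤ q.1
  rw [hg, (gc_rAdj h).le_iff_le]

lemma rAdj_preimFH_SigmaMap_deltaOpen (hA : IsSpatialFrame A.P.L) (hB : IsSpatialFrame B.P.L)
    (g : A ⟶ B) (a : A.P.L) :
    rAdj ⇑(preimFH (SigmaMap g)) (A.deltaOpen a) = B.deltaOpen (g.1 a) := by
  obtain ⟨h, -, -, hg⟩ := g.2
  refine eq_of_forall_le_iff fun V => ?_
  obtain ⟨b, rfl⟩ := B.deltaOpen_surjective V
  rw [← (gc_rAdj (preimFH (SigmaMap g))).le_iff_le, preimFH_SigmaMap_deltaOpen g hg]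
  change DeltaS _ ⊆ DeltaS _ ↔ DeltaS _ ⊆ DeltaS _
  rw [DeltaS_subset_DeltaS_iff hA, DeltaS_subset_DeltaS_iff hB, hg, (gc_rAdj h).le_iff_le]

def homOfOrderIso (e : A.P.L ≃o B.P.L) (he : ∀ a, e a ∈ B.P.s ↔ a ∈ A.P.s) : A ⟶ B :=
  have he' (b : B.P.L) : e.symm b ∈ A.P.s ↔ b ∈ B.P.s := by rw [← he, e.apply_symm_apply]
  ⟨e, e.symm, FrmS.dominating_orderIso e.symm he', FrmS.compatible_orderIso e.symm he',
    (rAdj_orderIso e.symm).symm⟩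

def isoOfOrderIso (e : A.P.L ≃o B.P.L) (he : ∀ a, e a ∈ B.P.s ↔ a ∈ A.P.s) : A ≅ B where
  hom := homOfOrderIso e he
  inv := homOfOrderIso e.symm fun b => by rw [← he, e.apply_symm_apply]
  hom_inv_id := Subtype.ext (funext e.symm_apply_apply)
  inv_hom_id := Subtype.ext (funext e.apply_symm_apply)

/-- The frame homomorphism of which `g` is the right adjoint; it is unique by `rAdj_injective`. -/
noncomputable def frameHom (g : A ⟶ B) : FrmSCat.mk B.P ⟶ FrmSCat.mk A.P :=
  ⟨g.2.choose, g.2.choose_spec.1, g.2.choose_spec.2.1⟩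

lemma eq_rAdj_frameHom (g : A ⟶ B) : g.1 = rAdj ⇑(frameHom g).1 := g.2.choose_spec.2.2

lemma frameHom_eq {g : A ⟶ B} {h : FrmSCat.mk B.P ⟶ FrmSCat.mk A.P} (hg : g.1 = rAdj ⇑h.1) :
    frameHom g = h :=
  Subtype.ext (rAdj_injective ((eq_rAdj_frameHom g).symm.trans hg))

end LocS

def FrmSCat.toLocSHom {A B : FrmSCat.{u}} (h : A ⟶ B) : LocS.mk B.P ⟶ LocS.mk A.P :=
  ⟨rAdj ⇑h.1, h.1, h.2.1, h.2.2, rfl⟩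

def FrmSCat.orderIsoOfIso {X Y : FrmSCat.{u}} (e : X ≅ Y) : X.P.L ≃o Y.P.L :=
  Equiv.toOrderIso
    ⟨e.hom.1, e.inv.1, fun a => congrArg (fun f : X ⟶ X => f.1 a) e.hom_inv_id,
      fun b => congrArg (fun f : Y ⟶ Y => f.1 b) e.inv_hom_id⟩
    (OrderHomClass.mono e.hom.1) (OrderHomClass.mono e.inv.1)

instance : ObjectProperty.IsClosedUnderIsomorphisms
    (fun P : FrmSCat.{u} => IsSpatialFrame P.P.L) where
  of_iso e hX := hX.of_orderIso (FrmSCat.orderIsoOfIso e)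

noncomputable def sobOmega : SobLSS.{u} ⥤ SpLocS.{u} :=
  ObjectProperty.lift _ (ObjectProperty.ι _ ⋙ Omega) fun S => S.obj.isSpatialFrame_O

def spSigma : SpLocS.{u} ⥤ SobLSS.{u} :=
  ObjectProperty.lift _ (ObjectProperty.ι _ ⋙ SigmaF) fun A => SigmaObj_isSobLSS A.obj

noncomputable def sobUnitIso : 𝟭 SobLSS.{u} ≅ sobOmega ⋙ spSigma :=
  NatIso.ofComponents
    (fun S => (ObjectProperty.fullyFaithfulι _).preimageIso
      (LSS.isoOfEquiv (S.obj.toSpecEquiv S.property) (S.obj.preimage_toSpec_mem_iff S.property)))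
    fun {S _} f => ObjectProperty.hom_ext _ <| Subtype.ext <| funext fun x =>
      Subtype.ext (S.obj.rAdj_preimFH_extO f.hom x).symm

noncomputable def spCounitIso : spSigma ⋙ sobOmega ≅ 𝟭 SpLocS.{u} :=
  NatIso.ofComponents
    (fun A => ((ObjectProperty.fullyFaithfulι _).preimageIso (X := A)
      (Y := (spSigma ⋙ sobOmega).obj A)
      (LocS.isoOfOrderIso _ (A.obj.deltaOrderIso_mem_iff A.property))).symm)
    fun {A B} g => ObjectProperty.hom_ext _ <| Subtype.ext <| funext fun U => by
      obtain ⟨a, rfl⟩ := A.obj.deltaOpen_surjective U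
      change (B.obj.deltaOrderIso B.property).symm
          (rAdj ⇑(preimFH (SigmaMap g.hom)) (A.obj.deltaOpen a)) =
        g.hom.1 ((A.obj.deltaOrderIso A.property).symm (A.obj.deltaOpen a))
      rw [LocS.rAdj_preimFH_SigmaMap_deltaOpen A.property B.property,
        ← LocS.deltaOrderIso_apply _ B.property, ← LocS.deltaOrderIso_apply _ A.property,
        OrderIso.symm_apply_apply, OrderIso.symm_apply_apply]

noncomputable def sobLSSEquivSpLocS : SobLSS.{u} ≌ SpLocS.{u} :=
  CategoryTheory.Equivalence.mk sobOmega spSigma sobUnitIso spCounitIso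

noncomputable def locSToFrmSCatOp : LocS.{u} ⥤ FrmSCat.{u}ᵒᵖ where
  obj A := Opposite.op ⟨A.P⟩
  map g := (LocS.frameHom g).op
  map_id A := congrArg Quiver.Hom.op <| LocS.frameHom_eq (rAdj_id (L := A.P.L)).symm
  map_comp f g := congrArg Quiver.Hom.op <| LocS.frameHom_eq <| by
    change g.1 ∘ f.1 = _
    rw [LocS.eq_rAdj_frameHom f, LocS.eq_rAdj_frameHom g]
    exact (rAdj_comp _ _).symm

def frmSCatOpToLocS : FrmSCat.{u}ᵒᵖ ⥤ LocS.{u} where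
  obj X := ⟨X.unop.P⟩
  map φ := FrmSCat.toLocSHom φ.unop
  map_id X := Subtype.ext (rAdj_id (L := X.unop.P.L))
  map_comp φ ψ := Subtype.ext (rAdj_comp ψ.unop.1 φ.unop.1)

noncomputable def locSEquivFrmSCatOp : LocS.{u} ≌ FrmSCat.{u}ᵒᵖ :=
  CategoryTheory.Equivalence.mk locSToFrmSCatOp frmSCatOpToLocS
    (NatIso.ofComponents (fun _ => Iso.refl _) fun g => Subtype.ext (LocS.eq_rAdj_frameHom g))
    (NatIso.ofComponents (fun _ => Iso.refl _) fun φ =>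
      Quiver.Hom.unop_inj (LocS.frameHom_eq (g := FrmSCat.toLocSHom φ.unop) rfl))

noncomputable def spLocSEquivSpFrmSOp : SpLocS.{u} ≌ SpFrmS.{u}ᵒᵖ :=
  (locSEquivFrmSCatOp.congrFullSubcategory
    (Q := ObjectProperty.op fun P : FrmSCat.{u} => IsSpatialFrame P.P.L) rfl).trans
    (ObjectProperty.opEquivalence _)

/-- **A Stone-type duality**: the categories `SobLSS`, `SpLocS` and
`SpFrmS^op` are all equivalent. -/
theorem stone_type_duality :
    Nonempty (SobLSS.{u} ≌ SpLocS.{u}) ∧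
    Nonempty (SpLocS.{u} ≌ (SpFrmS.{u})ᵒᵖ) ∧
    Nonempty (SobLSS.{u} ≌ (SpFrmS.{u})ᵒᵖ) :=
  ⟨⟨sobLSSEquivSpLocS⟩, ⟨spLocSEquivSpFrmSOp⟩, ⟨sobLSSEquivSpLocS.trans spLocSEquivSpFrmSOp⟩⟩
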